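/- arXiv:1707.01666 — 2 statements merged into one kernel-verified Lean document; each statement's English description precedes it below -/
import Mathlib

section
/- Let s be a real number with 0 < s < 1. Then there exists a constant C > 0 such that for every integer n, the sum over all pairs of integers (n₁, n₃) with n₁ ≠ n and n₃ ≠ n of the quantity [(1 + n²)^{2s} / φ(n₁, n₁+n₃−n, n₃, n)²] multiplied by the cardinality of the set {(m₁, m₃) ∈ ℤ² : m₁ ≠ n₁, m₃ ≠ n₁, and |φ(n₁, n₁+n₃−n, n₃, n) + φ(m₁, m₁+m₃−n₁, m₃, n₁)| ≤ 216} is at most C. -/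
/-!
Write `a = n₁ - n`, `b = n₃ - n`. The phase factors as `φ₁ = -a b Q` with
`Q = 3 (n₁ + n₃)² + a² + b² ≥ (1 + n²) / 2`. In the inner set, `φ₂` is strictly monotone in `m₃`
once `m₁` is fixed, and `m₁ - n₁` divides `φ₂`; so `(m₁, m₃) ↦ (φ₂, m₁ - n₁)` injects the inner set
into pairs `(M, d)` with `d ∣ M` and `M` in the window of `433` integers around `-φ₁`. The divisor bound
`τ(M) ≪_ε M^ε` with `ε = 1 - s` then bounds the inner count by `≪ |φ₁|^(1-s)`, and the summand by
`≪ ⟨n⟩^(4s) |a b Q|^(-1-s) ≪ |a|^(-1-s) |b|^(-1-s)`, which is summable over `(a, b)` uniformly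
in `n`.
-/

open Real Finset

lemma natCast_add_one_le_rpow_pow {x ε : ℝ} (hx : 0 ≤ x) (h2 : 2 ≤ x ^ ε) (α : ℕ) :
    (α + 1 : ℝ) ≤ (x ^ α) ^ ε :=
  calc (α + 1 : ℝ) ≤ 2 ^ α := by exact_mod_cast Nat.lt_two_pow_self
    _ ≤ (x ^ ε) ^ α := pow_le_pow_left₀ zero_le_two h2 α
    _ = (x ^ α) ^ ε := rpow_pow_comm hx ε α

lemma natCast_add_one_le_mul_rpow_pow {x ε : ℝ} (hε : 0 < ε) (hx : 2 ≤ x) (α : ℕ) :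
    (α + 1 : ℝ) ≤ max 1 (ε * log 2)⁻¹ * (x ^ α) ^ ε := by
  set K := max 1 (ε * log 2)⁻¹
  have hεlog : 0 < ε * log 2 := mul_pos hε (log_pos one_lt_two)
  have hK : 1 ≤ K * (ε * log 2) := by
    rw [← div_le_iff₀ hεlog, one_div]; exact le_max_right _ _
  have hexp : 1 + α * (ε * log 2) ≤ (x ^ α) ^ ε :=
    calc 1 + α * (ε * log 2) ≤ exp (α * (ε * log 2)) := by
          linarith [add_one_le_exp (α * (ε * log 2))]
      _ = (2 ^ α) ^ ε := by
        rw [← rpow_pow_comm zero_le_two, ← rpow_natCast, ← rpow_mul (by positivity),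
          rpow_def_of_pos two_pos]
        ring_nf
      _ ≤ (x ^ α) ^ ε := by gcongr
  have hK1 : 1 ≤ K := le_max_left _ _
  nlinarith [(Nat.cast_nonneg α : (0:ℝ) ≤ α)]

theorem Nat.card_divisors_le_mul_rpow {ε : ℝ} (hε : 0 < ε) :
    ∃ C : ℝ, 0 ≤ C ∧ ∀ j : ℕ, (#j.divisors : ℝ) ≤ C * j ^ ε := by
  set K : ℝ := max 1 (ε * Real.log 2)⁻¹
  set B := ⌈(2 : ℝ) ^ ε⁻¹⌉₊
  have hK : 1 ≤ K := le_max_left _ _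
  refine ⟨K ^ B, by positivity, fun j => ?_⟩
  rcases eq_or_ne j 0 with rfl | hj
  · simp only [Nat.divisors_zero, card_empty, Nat.cast_zero]; positivity
  -- Only the primes below `2 ^ ε⁻¹` can have `α + 1 > p ^ (α ε)`; they cost a factor `K` each.
  have hprime : ∀ p ∈ j.primeFactors, ((j.factorization p + 1 : ℕ) : ℝ) ≤
      (if p ∈ range B then K else 1) * ((p : ℝ) ^ j.factorization p) ^ ε := by
    intro p hp
    have hp2 : (2 : ℝ) ≤ p := by exact_mod_cast (Nat.prime_of_mem_primeFactors hp).two_le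
    push_cast
    split_ifs with hpB
    · exact natCast_add_one_le_mul_rpow_pow hε hp2 _
    · have : (2 : ℝ) ^ ε⁻¹ ≤ p :=
        (Nat.le_ceil _).trans (by exact_mod_cast not_lt.mp (mem_range.not.mp hpB))
      rw [one_mul]
      refine natCast_add_one_le_rpow_pow (by positivity) ?_ _
      calc (2 : ℝ) = ((2 : ℝ) ^ ε⁻¹) ^ ε := by
            rw [← rpow_mul zero_le_two, inv_mul_cancel₀ hε.ne', rpow_one]
        _ ≤ (p : ℝ) ^ ε := by gcongr
  have hsmall : ∏ p ∈ j.primeFactors, (if p ∈ range B then K else 1) ≤ K ^ B := by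
    rw [prod_ite_mem, prod_const]
    exact pow_le_pow_right₀ hK ((card_le_card inter_subset_right).trans (card_range B).le)
  have hj_eq : (j : ℝ) = ∏ p ∈ j.primeFactors, (p : ℝ) ^ j.factorization p := by
    conv_lhs => rw [← Nat.prod_factorization_pow_eq_self hj]
    push_cast [Nat.prod_factorization_eq_prod_primeFactors]
    rfl
  calc (#j.divisors : ℝ) = ∏ p ∈ j.primeFactors, ((j.factorization p + 1 : ℕ) : ℝ) := by
        rw [Nat.card_divisors hj]; push_cast; rfl
    _ ≤ ∏ p ∈ j.primeFactors,
          (if p ∈ range B then K else 1) * ((p : ℝ) ^ j.factorization p) ^ ε :=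
        prod_le_prod (fun _ _ => by positivity) hprime
    _ = (∏ p ∈ j.primeFactors, (if p ∈ range B then K else 1)) * (j : ℝ) ^ ε := by
        rw [prod_mul_distrib, finsetProd_rpow _ _ (fun _ _ => by positivity), hj_eq]
    _ ≤ K ^ B * (j : ℝ) ^ ε := by gcongr

theorem Int.card_divisors (z : ℤ) : #z.divisors = 2 * #z.natAbs.divisors := by
  rw [Int.divisors, card_disjUnion, card_map, card_map, two_mul]

/-- `phase x y z` is `φ(x, x + y - z, y, z)`. -/
def phase (x y z : ℤ) : ℤ := x ^ 4 - (x + y - z) ^ 4 + y ^ 4 - z ^ 4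

def phaseCofactor (x y z : ℤ) : ℤ := 3 * (x + y) ^ 2 + (x - z) ^ 2 + (y - z) ^ 2

lemma phase_eq (x y z : ℤ) : phase x y z = -((x - z) * (y - z) * phaseCofactor x y z) := by
  unfold phase phaseCofactor; ring

lemma phase_sub_phase (x y y' z : ℤ) :
    phase x y z - phase x y' z =
      -((x - z) * (y - y') * (3 * (y + y' + x - z) ^ 2 + (y - y') ^ 2 + (x - z) ^ 2)) := by
  unfold phase; ring

lemma phase_injective {x z : ℤ} (h : x ≠ z) : Function.Injective (phase x · z) := by
  intro y y' hyy'
  have hpos : 0 < 3 * (y + y' + x - z) ^ 2 + (y - y') ^ 2 + (x - z) ^ 2 := by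
    have := sub_ne_zero.mpr h; positivity
  have := phase_sub_phase x y y' z
  simpa [sub_eq_zero.mpr hyy', hpos.ne', sub_eq_zero, h] using this

lemma sub_dvd_phase (x y z : ℤ) : x - z ∣ phase x y z := by
  rw [phase_eq, dvd_neg, mul_assoc]; exact dvd_mul_right _ _

lemma two_le_phaseCofactor {x y z : ℤ} (hx : x ≠ z) (hy : y ≠ z) : 2 ≤ phaseCofactor x y z := by
  have hx' : 1 ≤ (x - z) ^ 2 :=
    (one_le_sq_iff_one_le_abs _).mpr (Int.one_le_abs (sub_ne_zero.mpr hx))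
  have hy' : 1 ≤ (y - z) ^ 2 :=
    (one_le_sq_iff_one_le_abs _).mpr (Int.one_le_abs (sub_ne_zero.mpr hy))
  unfold phaseCofactor; nlinarith [sq_nonneg (x + y)]

lemma phase_ne_zero {x y z : ℤ} (hx : x ≠ z) (hy : y ≠ z) : phase x y z ≠ 0 := by
  have := two_le_phaseCofactor hx hy
  rw [phase_eq, neg_ne_zero]
  exact mul_ne_zero (mul_ne_zero (sub_ne_zero.mpr hx) (sub_ne_zero.mpr hy)) (by omega)

lemma one_add_sq_le_two_mul_phaseCofactor {x y z : ℤ} (hx : x ≠ z) (hy : y ≠ z) :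
    1 + z ^ 2 ≤ 2 * phaseCofactor x y z := by
  have := two_le_phaseCofactor hx hy
  unfold phaseCofactor at *
  nlinarith [sq_nonneg (x + y - 3 * (x - z)), sq_nonneg (x + y - 3 * (y - z)), sq_nonneg (x - y)]

lemma abs_phase (x y z : ℤ) : |phase x y z| = |x - z| * |y - z| * phaseCofactor x y z := by
  have : 0 ≤ phaseCofactor x y z := by unfold phaseCofactor; positivity
  rw [phase_eq, abs_neg, abs_mul, abs_mul, abs_of_nonneg this]

lemma ncard_phase_near_le (z A R : ℤ) :
    {q : ℤ × ℤ | q.1 ≠ z ∧ q.2 ≠ z ∧ |A + phase q.1 q.2 z| ≤ R}.ncard ≤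
      ∑ M ∈ Icc (-A - R) (-A + R), #M.divisors := by
  set S := {q : ℤ × ℤ | q.1 ≠ z ∧ q.2 ≠ z ∧ |A + phase q.1 q.2 z| ≤ R}
  set T := (Icc (-A - R) (-A + R)).sigma fun M => M.divisors
  have hmaps : ∀ q ∈ S, (⟨phase q.1 q.2 z, q.1 - z⟩ : Σ _ : ℤ, ℤ) ∈ (T : Set (Σ _ : ℤ, ℤ)) := by
    rintro q ⟨hx, hy, hnear⟩
    rw [abs_le] at hnear
    simp only [T, coe_sigma, Set.mem_sigma_iff, coe_Icc, Set.mem_Icc, mem_coe, Int.mem_divisors]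
    exact ⟨⟨by omega, by omega⟩, sub_dvd_phase _ _ _, phase_ne_zero hx hy⟩
  have hinj : Set.InjOn (fun q : ℤ × ℤ => (⟨phase q.1 q.2 z, q.1 - z⟩ : Σ _ : ℤ, ℤ)) S := by
    rintro ⟨x, y⟩ ⟨hx, -⟩ ⟨x', y'⟩ - h
    simp only [Sigma.mk.injEq, heq_eq_eq, sub_left_inj] at h
    obtain ⟨hphase, rfl⟩ := h
    rw [phase_injective hx hphase]
  calc S.ncard ≤ (T : Set (Σ _ : ℤ, ℤ)).ncard :=
        Set.ncard_le_ncard_of_injOn _ hmaps hinj T.finite_toSet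
    _ = _ := by rw [Set.ncard_coe_finset, card_sigma]

lemma sum_card_divisors_Icc_le {ε C : ℝ} (hε0 : 0 ≤ ε) (hε1 : ε ≤ 1) (hC : 0 ≤ C)
    (hτ : ∀ j : ℕ, (#j.divisors : ℝ) ≤ C * j ^ ε) {B R : ℤ} (hB : B ≠ 0) (hR : 0 ≤ R) :
    (∑ M ∈ Icc (B - R) (B + R), #M.divisors : ℝ) ≤
      2 * (2 * R + 1) * (R + 1) * C * |(B : ℝ)| ^ ε := by
  have hterm : ∀ M ∈ Icc (B - R) (B + R),
      (#M.divisors : ℝ) ≤ 2 * (R + 1) * C * |(B : ℝ)| ^ ε := by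
    intro M hM
    have hRB : (R + 1 : ℝ) ^ ε ≤ R + 1 := rpow_le_self_of_one_le (by exact_mod_cast by omega) hε1
    have hMB : (M.natAbs : ℝ) ≤ (R + 1) * |(B : ℝ)| := by
      have : 1 ≤ |B| := Int.one_le_abs hB
      rw [mem_Icc] at hM
      have hMZ : |M| ≤ (R + 1) * |B| := by
        rw [abs_le]; constructor <;> nlinarith [le_abs_self B, neg_abs_le B]
      rw [Nat.cast_natAbs]; exact_mod_cast hMZ
    calc (#M.divisors : ℝ) = 2 * #M.natAbs.divisors := by rw [Int.card_divisors]; push_cast; rfl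
      _ ≤ 2 * (C * (M.natAbs : ℝ) ^ ε) := by gcongr; exact hτ _
      _ ≤ 2 * (C * ((R + 1) * |(B : ℝ)|) ^ ε) := by gcongr
      _ = 2 * C * (R + 1 : ℝ) ^ ε * |(B : ℝ)| ^ ε := by
        rw [mul_rpow (by exact_mod_cast by omega) (abs_nonneg _)]; ring
      _ ≤ 2 * (R + 1) * C * |(B : ℝ)| ^ ε := by
        have := rpow_nonneg (abs_nonneg (B : ℝ)) ε
        nlinarith [mul_nonneg hC this]
  have hcard : (#(Icc (B - R) (B + R)) : ℝ) = 2 * R + 1 := by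
    rw [Int.card_Icc, show B + R + 1 - (B - R) = 2 * R + 1 by ring, ← Int.cast_natCast,
      Int.toNat_of_nonneg (by omega)]
    push_cast; ring
  calc (∑ M ∈ Icc (B - R) (B + R), #M.divisors : ℝ)
      ≤ #(Icc (B - R) (B + R)) * (2 * (R + 1) * C * |(B : ℝ)| ^ ε) :=
        (sum_le_card_nsmul _ _ _ hterm).trans_eq (nsmul_eq_mul _ _)
    _ = _ := by rw [hcard]; ring

lemma rpow_two_mul_div_sq_mul_rpow_le {s N Q u v : ℝ} (hs0 : 0 ≤ s) (hs1 : s ≤ 1) (hu : 0 < u)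
    (hv : 0 < v) (hQ : 1 ≤ Q) (hN0 : 0 ≤ N) (hN : N ≤ 2 * Q) :
    N ^ (2 * s) / (u * v * Q) ^ 2 * (u * v * Q) ^ (1 - s) ≤
      4 * (u ^ (-(1 + s)) * v ^ (-(1 + s))) := by
  have hQ0 : 0 < Q := by linarith
  have hsplit : (u * v * Q) ^ (1 - s) / (u * v * Q) ^ 2 =
      u ^ (-(1 + s)) * v ^ (-(1 + s)) * Q ^ (-(1 + s)) := by
    rw [← rpow_two, ← rpow_sub (by positivity), show 1 - s - 2 = -(1 + s) by ring,
      mul_rpow (by positivity) hQ0.le, mul_rpow hu.le hv.le]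
  have hNQ : N ^ (2 * s) * Q ^ (-(1 + s)) ≤ 4 :=
    calc N ^ (2 * s) * Q ^ (-(1 + s)) ≤ (2 * Q) ^ (2 * s) * Q ^ (-(1 + s)) := by gcongr
      _ = 2 ^ (2 * s) * Q ^ (s - 1) := by
        rw [mul_rpow zero_le_two hQ0.le, mul_assoc, ← rpow_add hQ0]; ring_nf
      _ ≤ 2 ^ (2 : ℝ) * 1 :=
        mul_le_mul (rpow_le_rpow_of_exponent_le one_le_two (by linarith))
          (rpow_le_one_of_one_le_of_nonpos hQ (by linarith)) (by positivity) (by positivity)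
      _ = 4 := by norm_num
  calc N ^ (2 * s) / (u * v * Q) ^ 2 * (u * v * Q) ^ (1 - s)
      = N ^ (2 * s) * Q ^ (-(1 + s)) * (u ^ (-(1 + s)) * v ^ (-(1 + s))) := by
        rw [div_mul_eq_mul_div, mul_div_assoc, hsplit]; ring
    _ ≤ 4 * (u ^ (-(1 + s)) * v ^ (-(1 + s))) := by gcongr

lemma rpow_div_phase_sq_mul_ncard_le {s C : ℝ} (hs0 : 0 ≤ s) (hs1 : s ≤ 1) (hC : 0 ≤ C)
    (hτ : ∀ j : ℕ, (#j.divisors : ℝ) ≤ C * j ^ (1 - s)) {R : ℤ} (hR : 0 ≤ R) {x y n : ℤ}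
    (hx : x ≠ n) (hy : y ≠ n) :
    (1 + (n : ℝ) ^ 2) ^ (2 * s) / (phase x y n : ℝ) ^ 2 *
        ({q : ℤ × ℤ | q.1 ≠ x ∧ q.2 ≠ x ∧ |phase x y n + phase q.1 q.2 x| ≤ R}.ncard : ℝ) ≤
      8 * (2 * R + 1) * (R + 1) * C *
        (|((x - n : ℤ) : ℝ)| ^ (-(1 + s)) * |((y - n : ℤ) : ℝ)| ^ (-(1 + s))) := by
  set A := phase x y n
  have hcount : ({q : ℤ × ℤ | q.1 ≠ x ∧ q.2 ≠ x ∧ |A + phase q.1 q.2 x| ≤ R}.ncard : ℝ) ≤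
      2 * (2 * R + 1) * (R + 1) * C * |(A : ℝ)| ^ (1 - s) := by
    have hsum := sum_card_divisors_Icc_le (by linarith) (by linarith) hC hτ (neg_ne_zero.mpr
      (phase_ne_zero hx hy)) hR
    push_cast [abs_neg] at hsum
    exact (Nat.cast_le.mpr (ncard_phase_near_le x A R)).trans (by push_cast; exact hsum)
  have hA : |(A : ℝ)| = |((x - n : ℤ) : ℝ)| * |((y - n : ℤ) : ℝ)| * phaseCofactor x y n := by
    exact_mod_cast abs_phase x y n
  have hQ : (2 : ℝ) ≤ phaseCofactor x y n := by exact_mod_cast two_le_phaseCofactor hx hy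
  have hN : 1 + (n : ℝ) ^ 2 ≤ 2 * phaseCofactor x y n := by
    exact_mod_cast one_add_sq_le_two_mul_phaseCofactor hx hy
  have hab : ∀ {w : ℤ}, w ≠ n → 0 < |((w - n : ℤ) : ℝ)| := fun h => by
    simpa [sub_eq_zero] using h
  calc (1 + (n : ℝ) ^ 2) ^ (2 * s) / (A : ℝ) ^ 2 *
        ({q : ℤ × ℤ | q.1 ≠ x ∧ q.2 ≠ x ∧ |A + phase q.1 q.2 x| ≤ R}.ncard : ℝ)
      ≤ (1 + (n : ℝ) ^ 2) ^ (2 * s) / (A : ℝ) ^ 2 *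
        (2 * (2 * R + 1) * (R + 1) * C * |(A : ℝ)| ^ (1 - s)) := by gcongr
    _ = 2 * (2 * R + 1) * (R + 1) * C * ((1 + (n : ℝ) ^ 2) ^ (2 * s) / |(A : ℝ)| ^ 2 *
        |(A : ℝ)| ^ (1 - s)) := by rw [sq_abs]; ring
    _ ≤ 2 * (2 * R + 1) * (R + 1) * C *
        (4 * (|((x - n : ℤ) : ℝ)| ^ (-(1 + s)) * |((y - n : ℤ) : ℝ)| ^ (-(1 + s)))) := by
      have hK : 0 ≤ 2 * (2 * R + 1) * (R + 1) * C := by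
        have : (0 : ℝ) ≤ R := by exact_mod_cast hR
        positivity
      rw [hA]
      refine mul_le_mul_of_nonneg_left ?_ hK
      exact rpow_two_mul_div_sq_mul_rpow_le hs0 hs1 (hab hx) (hab hy) (by linarith)
        (by positivity) hN
    _ = _ := by ring

lemma tsum_le_mul_sq_tsum_of_le {G : Type*} [AddGroup G] {f : G × G → ℝ} {g : G → ℝ} {K : ℝ}
    (n : G) (hf : ∀ p, 0 ≤ f p) (hg0 : ∀ a, 0 ≤ g a) (hg : Summable g)
    (hfg : ∀ p, f p ≤ K * (g (p.1 - n) * g (p.2 - n))) :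
    ∑' p, f p ≤ K * (∑' a, g a) ^ 2 := by
  let e := (Equiv.subRight n).prodCongr (Equiv.subRight n)
  have hprod : Summable fun p : G × G => g p.1 * g p.2 := hg.mul_of_nonneg hg hg0 hg0
  have hshift : Summable fun p : G × G => K * (g (p.1 - n) * g (p.2 - n)) :=
    (hprod.comp_injective e.injective).mul_left K
  calc ∑' p, f p ≤ ∑' p : G × G, K * (g (p.1 - n) * g (p.2 - n)) :=
        Summable.tsum_le_tsum hfg (.of_nonneg_of_le hf hfg hshift) hshift
    _ = K * ∑' p : G × G, g p.1 * g p.2 := by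
        rw [tsum_mul_left]; exact congrArg _ (e.tsum_eq fun p => g p.1 * g p.2)
    _ = K * (∑' a, g a) ^ 2 := by rw [sq, hg.tsum_mul_tsum hg hprod]

/-- First-generation nearly-resonant sum bound: for `0 < s < 1` there is `C > 0` such
that for every `n : ℤ`, the sum over pairs `(n₁, n₃)` with `n₁ ≠ n`, `n₃ ≠ n` of
`⟨n⟩^{4s}/φ₁²` multiplied by the number of second-generation pairs `(m₁, m₃)` with
`m₁ ≠ n₁`, `m₃ ≠ n₁` and `|φ₁ + φ₂| ≤ 216` is at most `C`. -/
theorem nearly_resonant_sum_bound (s : ℝ) (hs₀ : 0 < s) (hs₁ : s < 1) :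
    ∃ C : ℝ, 0 < C ∧ ∀ n : ℤ,
      (∑' p : ℤ × ℤ,
        if p.1 ≠ n ∧ p.2 ≠ n then
          (1 + (n : ℝ) ^ 2) ^ (2 * s) /
            (((p.1 ^ 4 - (p.1 + p.2 - n) ^ 4 + p.2 ^ 4 - n ^ 4 : ℤ) : ℝ)) ^ 2 *
          (Set.ncard {q : ℤ × ℤ | q.1 ≠ p.1 ∧ q.2 ≠ p.1 ∧
            |(p.1 ^ 4 - (p.1 + p.2 - n) ^ 4 + p.2 ^ 4 - n ^ 4) +
              (q.1 ^ 4 - (q.1 + q.2 - p.1) ^ 4 + q.2 ^ 4 - p.1 ^ 4)| ≤ 216} : ℝ)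
        else 0) ≤ C := by
  obtain ⟨C, hC, hτ⟩ := Nat.card_divisors_le_mul_rpow (ε := 1 - s) (by linarith)
  set K : ℝ := 8 * (2 * (216 : ℤ) + 1) * ((216 : ℤ) + 1) * C
  set g : ℤ → ℝ := fun a => |(a : ℝ)| ^ (-(1 + s))
  refine ⟨K * (∑' a, g a) ^ 2 + 1, by positivity, fun n => ?_⟩
  refine (tsum_le_mul_sq_tsum_of_le n (fun p => ?_) (fun a => by positivity)
    (summable_abs_int_rpow (by linarith)) (fun p => ?_)).trans
    (le_add_of_nonneg_right zero_le_one)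
  · split_ifs <;> positivity
  · split_ifs with hp
    · exact rpow_div_phase_sq_mul_ncard_le hs₀.le hs₁.le hC hτ (by norm_num) hp.1 hp.2
    · positivity
end

section
/- Define a sequence N : ℕ → ℕ by N(0) = 0 and, for k ≥ 1, N(k) = the least integer N > N(k−1) such that Σ_{n=N(k−1)+1}^{N} n²/(1+n²)^{3/2} ≥ 1 (such N exists since the series Σ n²/(1+n²)^{3/2} diverges). Then there exist constants C₁, C₂ > 0 such that C₁·e^k ≤ N(k) ≤ C₂·e^k for all k ≥ 1. -/
/-!
Write `w n = n² / (1 + n²)^{3/2}`, so that `n⁻¹ - 2 n⁻² ≤ w n ≤ n⁻¹`. Every block of the greedy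
sequence has `w`-mass at least `1`, and less than `1 + w (N k)` by minimality. Hence the partial
sums of `w` up to `N k` are `k + O(1)`: for the upper bound, the overshoots `w (N k) ≤ 1 / N k`
are summable once the lower bound is known. Since the partial sums of `w` and of the harmonic
series differ by `O(1)`, this gives `log (N k) = k + O(1)`.
-/

open Finset Real

theorem sum_Ioc_eq_sum_range_sum_Ioc {M : Type*} [AddCommMonoid M] (f : ℕ → M) {N : ℕ → ℕ}
    (hN : Monotone N) (k : ℕ) :
    ∑ n ∈ Ioc (N 0) (N k), f n = ∑ j ∈ range k, ∑ n ∈ Ioc (N j) (N (j + 1)), f n := by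
  induction k with
  | zero => simp
  | succ k ih =>
    rw [sum_range_succ, ← ih, sum_Ioc_consecutive _ (hN k.zero_le) (hN k.le_succ)]

section GreedyBlocks

variable {a : ℕ → ℝ} {N : ℕ → ℕ}

theorem natCast_le_sum_Ioc_of_one_le_blocks (hN : Monotone N)
    (hlarge : ∀ j, 1 ≤ ∑ n ∈ Ioc (N j) (N (j + 1)), a n) (k : ℕ) :
    (k : ℝ) ≤ ∑ n ∈ Ioc (N 0) (N k), a n := by
  rw [sum_Ioc_eq_sum_range_sum_Ioc a hN]
  simpa using card_nsmul_le_sum (range k) _ 1 fun j _ => hlarge j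

theorem sum_Ioc_le_one_add_of_forall_lt {x y : ℕ} (hxy : x < y)
    (hmin : ∀ m, x < m → m < y → ∑ n ∈ Ioc x m, a n < 1) :
    ∑ n ∈ Ioc x y, a n ≤ 1 + a y := by
  obtain ⟨z, rfl⟩ : ∃ z, y = z + 1 := ⟨y - 1, by omega⟩
  rw [sum_Ioc_succ_top (Nat.le_of_lt_succ hxy), add_le_add_iff_right]
  rcases (Nat.le_of_lt_succ hxy).lt_or_eq with hxz | rfl
  · exact (hmin z hxz z.lt_succ_self).le
  · simp

theorem sum_Ioc_le_add_sum_of_greedy (hN : StrictMono N)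
    (hmin : ∀ k m, N k < m → m < N (k + 1) → ∑ n ∈ Ioc (N k) m, a n < 1) (k : ℕ) :
    ∑ n ∈ Ioc (N 0) (N k), a n ≤ k + ∑ j ∈ range k, a (N (j + 1)) := by
  rw [sum_Ioc_eq_sum_range_sum_Ioc a hN.monotone]
  calc ∑ j ∈ range k, ∑ n ∈ Ioc (N j) (N (j + 1)), a n
      ≤ ∑ j ∈ range k, (1 + a (N (j + 1))) :=
        sum_le_sum fun j _ => sum_Ioc_le_one_add_of_forall_lt (hN j.lt_succ_self) (hmin j)
    _ = k + ∑ j ∈ range k, a (N (j + 1)) := by simp [sum_add_distrib]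

theorem exp_le_of_greedy (ha : ∀ n : ℕ, 0 < n → a n ≤ (n : ℝ)⁻¹) (hN0 : N 0 = 0)
    (hN : StrictMono N) (hlarge : ∀ j, 1 ≤ ∑ n ∈ Ioc (N j) (N (j + 1)), a n) (k : ℕ) :
    exp k ≤ N (k + 1) := by
  have hpos : 0 < N (k + 1) := hN0 ▸ hN k.succ_pos
  have hle_harmonic : ∑ n ∈ Ioc (N 0) (N (k + 1)), a n ≤ harmonic (N (k + 1)) := by
    rw [hN0, ← Icc_add_one_left_eq_Ioc, zero_add, harmonic_eq_sum_Icc]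
    push_cast
    exact sum_le_sum fun n hn => ha n (mem_Icc.mp hn).1
  have := natCast_le_sum_Ioc_of_one_le_blocks hN.monotone hlarge (k + 1)
  rw [← le_log_iff_exp_le (by exact_mod_cast hpos)]
  push_cast at this
  linarith [harmonic_le_one_add_log (N (k + 1))]

theorem exists_exp_bounds_of_greedy (C : ℝ) (ha : ∀ n : ℕ, 0 < n → a n ≤ (n : ℝ)⁻¹)
    (hharm : ∀ M : ℕ, (harmonic M : ℝ) ≤ ∑ n ∈ Icc 1 M, a n + C) (hN0 : N 0 = 0)
    (hN : StrictMono N) (hlarge : ∀ j, 1 ≤ ∑ n ∈ Ioc (N j) (N (j + 1)), a n)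
    (hmin : ∀ k m, N k < m → m < N (k + 1) → ∑ n ∈ Ioc (N k) m, a n < 1) :
    ∃ C₁ C₂ : ℝ, 0 < C₁ ∧ 0 < C₂ ∧ ∀ k : ℕ, 1 ≤ k →
      C₁ * exp k ≤ (N k : ℝ) ∧ (N k : ℝ) ≤ C₂ * exp k := by
  set S := ∑' j : ℕ, exp (-j)
  have hlower := exp_le_of_greedy ha hN0 hN hlarge
  have hovershoot (j : ℕ) : a (N (j + 1)) ≤ exp (-j) := by
    have hpos : (0 : ℝ) < N (j + 1) := (exp_pos j).trans_le (hlower j)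
    rw [exp_neg]
    exact (ha _ (by exact_mod_cast hpos)).trans (inv_anti₀ (exp_pos j) (hlower j))
  have hupper (k : ℕ) : log (N k + 1) ≤ k + (S + C) := by
    have hS : ∑ j ∈ range k, exp (-j : ℝ) ≤ S :=
      summable_exp_neg_nat.sum_le_tsum _ fun j _ => (exp_pos _).le
    have hsum := sum_Ioc_le_add_sum_of_greedy hN hmin k
    rw [hN0, ← Icc_add_one_left_eq_Ioc, zero_add] at hsum
    have := log_add_one_le_harmonic (N k)
    push_cast at this
    linarith [hharm (N k), sum_le_sum fun j (_ : j ∈ range k) => hovershoot j]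
  refine ⟨exp (-1), exp (S + C), exp_pos _, exp_pos _, fun k hk => ⟨?_, ?_⟩⟩
  · obtain ⟨j, rfl⟩ : ∃ j, k = j + 1 := ⟨k - 1, by omega⟩
    rw [← exp_add]
    convert hlower j using 2
    push_cast
    ring
  · calc (N k : ℝ) ≤ exp (log (N k + 1)) := by rw [exp_log (by positivity)]; linarith
      _ ≤ exp (k + (S + C)) := exp_le_exp.mpr (hupper k)
      _ = exp (S + C) * exp k := by rw [← exp_add, add_comm]

end GreedyBlocks

/-- `x² / ⟨x⟩³` with `⟨x⟩ = (1 + x²)^{1/2}`. -/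
noncomputable def bracketWeight (x : ℝ) : ℝ := x ^ 2 / (1 + x ^ 2) ^ ((3 : ℝ) / 2)

theorem rpow_three_halves_sq {x : ℝ} (hx : 0 ≤ x) : (x ^ ((3 : ℝ) / 2)) ^ 2 = x ^ 3 := by
  rw [← rpow_natCast, ← rpow_mul hx]
  norm_num

theorem pow_three_le_one_add_sq_rpow {x : ℝ} (hx : 0 ≤ x) :
    x ^ 3 ≤ (1 + x ^ 2) ^ ((3 : ℝ) / 2) := by
  rw [← pow_le_pow_iff_left₀ (by positivity) (by positivity) two_ne_zero,
    rpow_three_halves_sq (by positivity)]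
  nlinarith [pow_nonneg hx 4, pow_nonneg hx 2]

theorem one_add_sq_rpow_le {x : ℝ} (hx : 1 ≤ x) :
    (1 + x ^ 2) ^ ((3 : ℝ) / 2) ≤ x ^ 3 + 2 * x := by
  rw [← pow_le_pow_iff_left₀ (by positivity) (by positivity) two_ne_zero,
    rpow_three_halves_sq (by positivity)]
  nlinarith [pow_le_pow_left₀ zero_le_one hx 4, pow_le_pow_left₀ zero_le_one hx 2]

theorem bracketWeight_le_inv {x : ℝ} (hx : 0 < x) : bracketWeight x ≤ x⁻¹ := by
  calc bracketWeight x ≤ x ^ 2 / x ^ 3 :=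
        div_le_div_of_nonneg_left (by positivity) (by positivity)
          (pow_three_le_one_add_sq_rpow hx.le)
    _ = x⁻¹ := by field_simp

theorem inv_sub_bracketWeight_le {x : ℝ} (hx : 1 ≤ x) : x⁻¹ - bracketWeight x ≤ 2 * (x ^ 2)⁻¹ := by
  have hx0 : 0 < x := one_pos.trans_le hx
  have hw : x ^ 2 / (x ^ 3 + 2 * x) ≤ bracketWeight x :=
    div_le_div_of_nonneg_left (by positivity) (by positivity) (one_add_sq_rpow_le hx)
  have hdiff : x⁻¹ - x ^ 2 / (x ^ 3 + 2 * x) ≤ 2 * (x ^ 2)⁻¹ := by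
    rw [inv_eq_one_div, div_sub_div _ _ hx0.ne' (by positivity), div_le_iff₀ (by positivity)]
    field_simp
    nlinarith [pow_pos hx0 3, pow_pos hx0 4]
  linarith

theorem harmonic_le_sum_bracketWeight_add (M : ℕ) :
    (harmonic M : ℝ) ≤ ∑ n ∈ Icc 1 M, bracketWeight n + 2 * ∑' n : ℕ, ((n : ℝ) ^ 2)⁻¹ := by
  have hsummable : Summable fun n : ℕ => 2 * ((n : ℝ) ^ 2)⁻¹ :=
    (summable_nat_pow_inv.mpr one_lt_two).mul_left 2
  have herror : ∑ n ∈ Icc 1 M, ((n : ℝ)⁻¹ - bracketWeight n) ≤ ∑ n ∈ Icc 1 M, 2 * ((n : ℝ) ^ 2)⁻¹ :=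
    sum_le_sum fun n hn => inv_sub_bracketWeight_le (by exact_mod_cast (mem_Icc.mp hn).1)
  rw [sum_sub_distrib] at herror
  rw [← tsum_mul_left]
  simp only [harmonic_eq_sum_Icc, Rat.cast_sum, Rat.cast_inv, Rat.cast_natCast]
  linarith [hsummable.sum_le_tsum (Icc 1 M) fun n _ => by positivity]

/-- Block decomposition growth: let `N : ℕ → ℕ` satisfy `N 0 = 0` and, for `k ≥ 1`,
`N k` is the least integer `> N (k-1)` such that
`Σ_{n = N(k-1)+1}^{N k} n²/(1+n²)^{3/2} ≥ 1`. Then there exist `C₁, C₂ > 0` with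
`C₁ e^k ≤ N k ≤ C₂ e^k` for all `k ≥ 1`. -/
theorem block_sequence_exponential_growth (N : ℕ → ℕ) (hN0 : N 0 = 0)
    (hN : ∀ k : ℕ, 1 ≤ k →
      N (k - 1) < N k ∧
      1 ≤ (∑ n ∈ Finset.Icc (N (k - 1) + 1) (N k),
            (n : ℝ) ^ 2 / (1 + (n : ℝ) ^ 2) ^ ((3 : ℝ) / 2)) ∧
      ∀ m : ℕ, N (k - 1) < m → m < N k →
        (∑ n ∈ Finset.Icc (N (k - 1) + 1) m,
            (n : ℝ) ^ 2 / (1 + (n : ℝ) ^ 2) ^ ((3 : ℝ) / 2)) < 1) :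
    ∃ C₁ C₂ : ℝ, 0 < C₁ ∧ 0 < C₂ ∧ ∀ k : ℕ, 1 ≤ k →
      C₁ * Real.exp k ≤ (N k : ℝ) ∧ (N k : ℝ) ≤ C₂ * Real.exp k := by
  have hstep (k : ℕ) : N k < N (k + 1) ∧
      1 ≤ ∑ n ∈ Ioc (N k) (N (k + 1)), bracketWeight n ∧
      ∀ m, N k < m → m < N (k + 1) → ∑ n ∈ Ioc (N k) m, bracketWeight n < 1 := by
    simpa only [add_tsub_cancel_right, Icc_add_one_left_eq_Ioc, bracketWeight] using hN (k + 1) k.succ_pos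
  exact exists_exp_bounds_of_greedy _ (fun n hn => bracketWeight_le_inv (Nat.cast_pos.mpr hn))
    harmonic_le_sum_bracketWeight_add hN0 (strictMono_nat_of_lt_succ fun k => (hstep k).1)
    (fun k => (hstep k).2.1) (fun k => (hstep k).2.2)
end
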